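/- arXiv:2205.07159 — 6 statements merged into one kernel-verified Lean document; each statement's English description precedes it below -/
import Mathlib

section
/- For any rotation matrix R ∈ SO(3), the squared norm of vex(P_a(R)) equals 4(1 - ||R||_I)·||R||_I, where P_a(R) = (R - Rᵀ)/2, vex is the inverse of the hat map on skew-symmetric matrices, and ||R||_I = (1/4)Tr(I₃ - R). -/
open Matrix

/-- Hat map: skew-symmetric matrix with `hat y *ᵥ z = y × z`. -/
noncomputable def hat (y : Fin 3 → ℝ) : Matrix (Fin 3) (Fin 3) ℝ :=
  !![0, -y 2, y 1; y 2, 0, -y 0; -y 1, y 0, 0]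

/-- Anti-symmetric projection. -/
noncomputable def Pa (A : Matrix (Fin 3) (Fin 3) ℝ) : Matrix (Fin 3) (Fin 3) ℝ :=
  (1/2 : ℝ) • (A - Aᵀ)

/-- Inverse of the hat map on skew-symmetric matrices. -/
noncomputable def vex (A : Matrix (Fin 3) (Fin 3) ℝ) : Fin 3 → ℝ :=
  ![A 2 1, A 0 2, A 1 0]

/-- Normalized Euclidean distance on SO(3). -/
noncomputable def normI (R : Matrix (Fin 3) (Fin 3) ℝ) : ℝ :=
  (1/4) * Matrix.trace (1 - R)

/-- Membership in SO(3). -/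
def SO3 (R : Matrix (Fin 3) (Fin 3) ℝ) : Prop :=
  R * Rᵀ = 1 ∧ Rᵀ * R = 1 ∧ R.det = 1

/-! For a rotation `R` with `t = tr R`, the squared norm of `vex (Pa R)` is
`(tr (Rᵀ R) - tr (R²)) / 4`. Orthogonality gives `tr (Rᵀ R) = 3`, and since `adj R = Rᵀ`,
the identity `tr (A²) = (tr A)² - 2 tr (adj A)` for `3 × 3` matrices gives `tr (R²) = t² - 2t`.
Both sides then equal `(3 - t)(1 + t) / 4`. -/

theorem sum_vex_Pa_sq (A : Matrix (Fin 3) (Fin 3) ℝ) :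
    ∑ i, vex (Pa A) i ^ 2 = (trace (Aᵀ * A) - trace (A * A)) / 4 := by
  simp only [vex, Pa, Fin.sum_univ_three, trace_fin_three, mul_apply, Matrix.smul_apply,
    Matrix.sub_apply, transpose_apply, smul_eq_mul, cons_val_zero, cons_val_one, cons_val_two,
    head_cons, tail_cons]
  ring

theorem trace_mul_self_fin_three {α : Type*} [CommRing α] (A : Matrix (Fin 3) (Fin 3) α) :
    trace (A * A) = trace A ^ 2 - 2 * trace (adjugate A) := by
  simp only [trace_fin_three, mul_apply, Fin.sum_univ_three, adjugate_fin_three, of_apply,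
    cons_val', cons_val_zero, cons_val_fin_one, cons_val_one, cons_val]
  ring

theorem adjugate_eq_transpose {n α : Type*} [Fintype n] [DecidableEq n] [CommRing α]
    {R : Matrix n n α} (hR : Rᵀ * R = 1) (hdet : R.det = 1) : adjugate R = Rᵀ :=
  calc adjugate R = (Rᵀ * R) * adjugate R := by rw [hR, Matrix.one_mul]
    _ = Rᵀ := by rw [Matrix.mul_assoc, mul_adjugate, hdet, one_smul, Matrix.mul_one]

theorem vex_Pa_norm_sq (R : Matrix (Fin 3) (Fin 3) ℝ) (hR : SO3 R) :
    ∑ i, (vex (Pa R) i) ^ 2 = 4 * (1 - normI R) * normI R := by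
  obtain ⟨-, hRtR, hdet⟩ := hR
  have htr_sq : trace (R * R) = trace R ^ 2 - 2 * trace R := by
    rw [trace_mul_self_fin_three, adjugate_eq_transpose hRtR hdet, trace_transpose]
  have hnormI : normI R = (3 - trace R) / 4 := by
    rw [normI, trace_sub, trace_one, Fintype.card_fin]
    ring
  rw [sum_vex_Pa_sq, hRtR, trace_one, Fintype.card_fin, htr_sq, hnormI]
  ring
end

section
/- Let R : ℝ → SO(3) be differentiable with Ṙ = -[Ω]_× R for a continuous Ω : ℝ → ℝ³, and let R̂ : ℝ → SO(3) satisfy R̂̇ = R̂ [w_Ω]_× - [Ω̂]_× R̂. Then the error R̃ = R R̂ᵀ satisfies R̃̇ = -[Ω̃ + R w_Ω]_× R̃, where Ω̃ = Ω - R̃ Ω̂. -/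
open Matrix

lemma hat_mulVec_mul (Q : Matrix (Fin 3) (Fin 3) ℝ) (h1 : Qᵀ * Q = 1) (hdet : Q.det = 1)
    (v : Fin 3 → ℝ) : hat (Q *ᵥ v) * Q = Q * hat v := by
  have hT : Qᵀ = Q.adjugate := by
    calc Qᵀ = Qᵀ * (Q * Q.adjugate) := by rw [Matrix.mul_adjugate, hdet, one_smul, mul_one]
    _ = Q.adjugate := by rw [← mul_assoc, h1, one_mul]
  rw [Matrix.adjugate_fin_three] at hT
  have E := fun l i => congrFun (congrFun hT l) i
  have E00 := E 0 0; have E01 := E 1 0; have E02 := E 2 0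
  have E10 := E 0 1; have E11 := E 1 1; have E12 := E 2 1
  have E20 := E 0 2; have E21 := E 1 2; have E22 := E 2 2
  simp only [Matrix.transpose_apply, Matrix.cons_val', Matrix.cons_val_zero, Matrix.cons_val_one,
    Matrix.head_cons, Matrix.head_fin_const, Matrix.empty_val', Matrix.cons_val_fin_one,
    Matrix.of_apply, Matrix.cons_val_two, Matrix.tail_cons] at E00 E01 E02 E10 E11 E12 E20 E21 E22
  ext i j
  fin_cases i <;> fin_cases j <;>
    simp [hat, Matrix.mul_apply, Matrix.mulVec, dotProduct, Fin.sum_univ_three]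
  · linear_combination v 1 * E02 - v 2 * E01
  · linear_combination -v 0 * E02 + v 2 * E00
  · linear_combination v 0 * E01 - v 1 * E00
  · linear_combination v 1 * E12 - v 2 * E11
  · linear_combination -v 0 * E12 + v 2 * E10
  · linear_combination v 0 * E11 - v 1 * E10
  · linear_combination v 1 * E22 - v 2 * E21
  · linear_combination -v 0 * E22 + v 2 * E20
  · linear_combination v 0 * E21 - v 1 * E20

lemma hat_add (a b : Fin 3 → ℝ) : hat (a + b) = hat a + hat b := by
  ext i j; fin_cases i <;> fin_cases j <;> simp [hat] <;> ring

lemma hat_sub (a b : Fin 3 → ℝ) : hat (a - b) = hat a - hat b := by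
  ext i j; fin_cases i <;> fin_cases j <;> simp [hat] <;> ring

lemma hat_transpose (a : Fin 3 → ℝ) : (hat a)ᵀ = -hat a := by
  ext i j; fin_cases i <;> fin_cases j <;> simp [hat]

lemma main_id (R Rh : Matrix (Fin 3) (Fin 3) ℝ) (Ω Ωh wΩ : Fin 3 → ℝ)
    (hSO : SO3 R) (hSOh : SO3 Rh) :
    -(hat Ω) * R * Rhᵀ + R * (Rh * hat wΩ - hat Ωh * Rh)ᵀ
      = -(hat ((Ω - (R * Rhᵀ) *ᵥ Ωh) + R *ᵥ wΩ)) * (R * Rhᵀ) := by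
  have hdetprod : (R * Rhᵀ).det = 1 := by
    rw [Matrix.det_mul, Matrix.det_transpose, hSO.2.2, hSOh.2.2, mul_one]
  have horth : (R * Rhᵀ)ᵀ * (R * Rhᵀ) = 1 := by
    rw [Matrix.transpose_mul, Matrix.transpose_transpose, mul_assoc, ← mul_assoc Rᵀ,
      hSO.2.1, one_mul]
    exact hSOh.1
  have hkey1 : hat (R *ᵥ wΩ) * R = R * hat wΩ := hat_mulVec_mul R hSO.2.1 hSO.2.2 wΩ
  have hkey2 : hat ((R * Rhᵀ) *ᵥ Ωh) * (R * Rhᵀ) = (R * Rhᵀ) * hat Ωh :=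
    hat_mulVec_mul _ horth hdetprod Ωh
  have h3 : hat (R *ᵥ wΩ) * (R * Rhᵀ) = R * hat wΩ * Rhᵀ := by
    rw [← mul_assoc, hkey1]
  rw [hat_add, hat_sub, Matrix.transpose_sub, Matrix.transpose_mul, Matrix.transpose_mul,
    hat_transpose, hat_transpose]
  have expand : -(hat Ω - hat ((R * Rhᵀ) *ᵥ Ωh) + hat (R *ᵥ wΩ)) * (R * Rhᵀ)
      = -(hat Ω * (R * Rhᵀ)) + hat ((R * Rhᵀ) *ᵥ Ωh) * (R * Rhᵀ)
        - hat (R *ᵥ wΩ) * (R * Rhᵀ) := by noncomm_ring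
  rw [expand, hkey2, h3]
  noncomm_ring

theorem attitude_error_dynamics
    (R Rh : ℝ → Matrix (Fin 3) (Fin 3) ℝ) (Ω Ωh wΩ : ℝ → Fin 3 → ℝ)
    (hSO : ∀ t, SO3 (R t)) (hSOh : ∀ t, SO3 (Rh t))
    (hΩcont : Continuous Ω)
    (hR : ∀ t i j, HasDerivAt (fun s => R s i j) ((-(hat (Ω t)) * R t) i j) t)
    (hRh : ∀ t i j, HasDerivAt (fun s => Rh s i j)
      ((Rh t * hat (wΩ t) - hat (Ωh t) * Rh t) i j) t) :
    ∀ t i j, HasDerivAt (fun s => (R s * (Rh s)ᵀ) i j)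
      ((-(hat ((Ω t - (R t * (Rh t)ᵀ).mulVec (Ωh t)) + (R t).mulVec (wΩ t)))
        * (R t * (Rh t)ᵀ)) i j) t := by
  intro t i j
  have hfun : (fun s => (R s * (Rh s)ᵀ) i j) = fun s => ∑ k, R s i k * Rh s j k := by
    funext s; simp [Matrix.mul_apply]
  have hsum : HasDerivAt (fun s => ∑ k : Fin 3, R s i k * Rh s j k)
      (∑ k : Fin 3, ((-(hat (Ω t)) * R t) i k * Rh t j k
        + R t i k * (Rh t * hat (wΩ t) - hat (Ωh t) * Rh t) j k)) t := by
    apply HasDerivAt.fun_sum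
    intro k _
    exact (hR t i k).mul (hRh t j k)
  have hval : (∑ k : Fin 3, ((-(hat (Ω t)) * R t) i k * Rh t j k
        + R t i k * (Rh t * hat (wΩ t) - hat (Ωh t) * Rh t) j k))
      = ((-(hat ((Ω t - (R t * (Rh t)ᵀ).mulVec (Ωh t)) + (R t).mulVec (wΩ t)))
        * (R t * (Rh t)ᵀ)) i j) := by
    have := congrFun (congrFun (main_id (R t) (Rh t) (Ω t) (Ωh t) (wΩ t) (hSO t) (hSOh t)) i) j
    rw [← this]
    simp [Matrix.mul_apply, Matrix.add_apply, Matrix.sub_apply, Matrix.transpose_apply,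
      Fin.sum_univ_three]
    ring
  rw [hfun]
  exact hval ▸ hsum
end

section
/- Let R̃ : ℝ → SO(3) be differentiable with R̃̇ = -[ω]_× R̃ for some ω : ℝ → ℝ³. Then d/dt ||R̃||_I = -(1/2) vex(P_a(R̃))ᵀ ω, where ||R̃||_I = (1/4)Tr(I₃ - R̃). -/
open Matrix

/-! The derivative of `normI` along `Ṙ = -[ω]_× R` is `(1/4) Tr([ω]_× R)`, and for any matrix `A`
the trace `Tr([y]_× A)` pairs `y` with the skew part of `A`: it equals `-2 vex(P_a(A)) ⬝ y`. -/

theorem trace_hat_mul (y : Fin 3 → ℝ) (A : Matrix (Fin 3) (Fin 3) ℝ) :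
    trace (hat y * A) = -2 * ∑ i, vex (Pa A) i * y i := by
  simp only [trace_fin_three, mul_apply, Fin.sum_univ_three, hat, vex, Pa, of_apply, cons_val',
    cons_val, cons_val_fin_one, Matrix.smul_apply, Matrix.sub_apply, transpose_apply, smul_eq_mul]
  ring

theorem hasDerivAt_trace {𝕜 F n : Type*} [NontriviallyNormedField 𝕜] [NormedAddCommGroup F]
    [NormedSpace 𝕜 F] [Fintype n] {A : 𝕜 → Matrix n n F} {A' : Matrix n n F} {t : 𝕜}
    (hA : ∀ i, HasDerivAt (fun s => A s i i) (A' i i) t) :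
    HasDerivAt (fun s => trace (A s)) (trace A') t :=
  HasDerivAt.fun_sum fun i _ => hA i

theorem normI_eq (R : Matrix (Fin 3) (Fin 3) ℝ) : normI R = (1/4) * (3 - trace R) := by
  simp [normI, trace_sub]

theorem hasDerivAt_normI {R : ℝ → Matrix (Fin 3) (Fin 3) ℝ} {R' : Matrix (Fin 3) (Fin 3) ℝ}
    {t : ℝ} (hR : ∀ i, HasDerivAt (fun s => R s i i) (R' i i) t) :
    HasDerivAt (fun s => normI (R s)) (-(1/4) * trace R') t := by
  simp only [normI_eq]
  have h := ((hasDerivAt_trace hR).const_sub 3).const_mul (1/4 : ℝ)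
  rwa [mul_neg, ← neg_mul] at h

theorem normI_deriv_general
    (Rt : ℝ → Matrix (Fin 3) (Fin 3) ℝ) (ω : ℝ → Fin 3 → ℝ)
    (hR : ∀ t i j, HasDerivAt (fun s => Rt s i j) ((-(hat (ω t)) * Rt t) i j) t) :
    ∀ t, HasDerivAt (fun s => normI (Rt s))
      (-(1/2) * ∑ i, vex (Pa (Rt t)) i * ω t i) t := by
  intro t
  convert hasDerivAt_normI fun i => hR t i i using 1
  rw [Matrix.neg_mul, trace_neg, trace_hat_mul]
  ring

theorem normI_deriv
    (Rt : ℝ → Matrix (Fin 3) (Fin 3) ℝ) (ω : ℝ → Fin 3 → ℝ)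
    (hSO : ∀ t, SO3 (Rt t))
    (hR : ∀ t i j, HasDerivAt (fun s => Rt s i j) ((-(hat (ω t)) * Rt t) i j) t) :
    ∀ t, HasDerivAt (fun s => normI (Rt s))
      (-(1/2) * ∑ i, vex (Pa (Rt t)) i * ω t i) t :=
  normI_deriv_general Rt ω hR
end

section
/- Let R̃ : ℝ → SO(3) satisfy R̃̇ = -[ω]_× R̃. Then the derivative of the vex of the anti-symmetric projection satisfies d/dt vex(P_a(R̃)) = -(1/2) Ψ(R̃) ω, where Ψ(R̃) = Tr(R̃) I₃ - R̃. -/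
open Matrix

theorem vex_Pa_deriv
    (Rt : ℝ → Matrix (Fin 3) (Fin 3) ℝ) (ω : ℝ → Fin 3 → ℝ)
    (hSO : ∀ t, SO3 (Rt t))
    (hR : ∀ t i j, HasDerivAt (fun s => Rt s i j) ((-(hat (ω t)) * Rt t) i j) t) :
    ∀ t i, HasDerivAt (fun s => vex (Pa (Rt s)) i)
      ((-(1/2) : ℝ) * ((Matrix.trace (Rt t) • (1 : Matrix (Fin 3) (Fin 3) ℝ)
        - Rt t).mulVec (ω t) i)) t := by
  intro t i
  have key : ∀ a b : Fin 3,
      HasDerivAt (fun s => (1/2 : ℝ) * (Rt s a b - Rt s b a))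
        ((1/2 : ℝ) * ((-(hat (ω t)) * Rt t) a b - (-(hat (ω t)) * Rt t) b a)) t :=
    fun a b => ((hR t a b).sub (hR t b a)).const_mul _
  fin_cases i
  · have h := key 2 1
    convert h using 1
    · funext s; simp [vex, Pa]
    simp [Matrix.mulVec, Matrix.mul_apply, Matrix.trace, Matrix.diag,
        dotProduct, hat, Fin.sum_univ_three, Matrix.one_apply,
        Matrix.smul_apply, Matrix.sub_apply]
    ring
  · have h := key 0 2
    convert h using 1
    · funext s; simp [vex, Pa]
    simp [Matrix.mulVec, Matrix.mul_apply, Matrix.trace, Matrix.diag,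
        dotProduct, hat, Fin.sum_univ_three, Matrix.one_apply,
        Matrix.smul_apply, Matrix.sub_apply]
    ring
  · have h := key 1 0
    convert h using 1
    · funext s; simp [vex, Pa]
    simp [Matrix.mulVec, Matrix.mul_apply, Matrix.trace, Matrix.diag,
        dotProduct, hat, Fin.sum_univ_three, Matrix.one_apply,
        Matrix.smul_apply, Matrix.sub_apply]
    ring
end

section
/- Let F ∈ ℝ³ with F ≠ (0, 0, a) for every a ≥ g, where g > 0 is a constant. Define ℑ = m||g e₃ - F|| with m > 0, f = (f₁, f₂, f₃) = F, q₀ = √(m(g - f₃)/(2ℑ) + 1/2), and q = (m f₂/(2ℑ q₀), -m f₁/(2ℑ q₀), 0). Then (q₀, q) is a well-defined unit quaternion, i.e., q₀ > 0 and q₀² + ||q||² = 1. -/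
theorem desired_quaternion_wellDefined (g m : ℝ) (hg : 0 < g) (hm : 0 < m)
    (F : Fin 3 → ℝ) (hF : ∀ a : ℝ, g ≤ a → F ≠ ![0, 0, a]) :
    let Im := m * Real.sqrt ((F 0) ^ 2 + (F 1) ^ 2 + (g - F 2) ^ 2)
    let q0 := Real.sqrt (m * (g - F 2) / (2 * Im) + 1/2)
    let q : Fin 3 → ℝ := ![m * F 1 / (2 * Im * q0), -(m * F 0) / (2 * Im * q0), 0]
    0 < q0 ∧ q0 ^ 2 + ∑ i, q i ^ 2 = 1 := by
  intro Im q0 q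
  set f1 := F 0 with hf1
  set f2 := F 1 with hf2
  set d := g - F 2 with hd
  have hsum_nonneg : (0:ℝ) ≤ f1 ^ 2 + f2 ^ 2 + d ^ 2 := by positivity
  set s := Real.sqrt (f1 ^ 2 + f2 ^ 2 + d ^ 2) with hs
  have hs2 : s ^ 2 = f1 ^ 2 + f2 ^ 2 + d ^ 2 := Real.sq_sqrt hsum_nonneg
  have hs0 : 0 ≤ s := Real.sqrt_nonneg _
  have habs : |d| ≤ s := by
    rw [← Real.sqrt_sq_eq_abs]
    apply Real.sqrt_le_sqrt
    nlinarith [sq_nonneg f1, sq_nonneg f2]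
  have hsd : 0 < s + d := by
    rcases lt_or_ge 0 (s + d) with h | h
    · exact h
    exfalso
    have hse : s = -d := le_antisymm (by linarith) (by cases abs_le.mp habs; linarith)
    have hf12 : f1 ^ 2 + f2 ^ 2 = 0 := by nlinarith
    have h1 : f1 = 0 := by nlinarith [sq_nonneg f1, sq_nonneg f2]
    have h2 : f2 = 0 := by nlinarith [sq_nonneg f1, sq_nonneg f2]
    have hge : g ≤ F 2 := by
      have : d ≤ 0 := by nlinarith [abs_nonneg d]
      linarith [hd ▸ this]
    apply hF (F 2) hge
    funext i
    fin_cases i <;> simp [← hf1, ← hf2, h1, h2]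
  have hspos : 0 < s := by
    have : d ≤ s := le_trans (le_abs_self d) habs
    linarith
  have hIm : Im = m * s := rfl
  have hImpos : 0 < Im := by rw [hIm]; positivity
  have harg : m * d / (2 * Im) + 1/2 = (s + d) / (2 * s) := by
    rw [hIm]; field_simp; ring
  have hargpos : 0 < m * d / (2 * Im) + 1/2 := by
    rw [harg]; positivity
  have hq0pos : 0 < q0 := Real.sqrt_pos.mpr hargpos
  have hq0sq : q0 ^ 2 = (s + d) / (2 * s) := by
    show Real.sqrt _ ^ 2 = _
    rw [Real.sq_sqrt hargpos.le, harg]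
  refine ⟨hq0pos, ?_⟩
  have hq0ne : q0 ≠ 0 := ne_of_gt hq0pos
  have hsne : s ≠ 0 := ne_of_gt hspos
  have hmne : m ≠ 0 := ne_of_gt hm
  have hsdne : s + d ≠ 0 := ne_of_gt hsd
  rw [Fin.sum_univ_three]
  show q0 ^ 2 + ((m * f2 / (2 * Im * q0)) ^ 2 + (-(m * f1) / (2 * Im * q0)) ^ 2 + 0 ^ 2) = 1
  have hA : 2 * s * q0 ^ 2 = s + d := by
    rw [hq0sq]; field_simp
  rw [hIm]
  field_simp
  linear_combination (2 * s * q0 ^ 2 - s + d) * hA - hs2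
end

section
/- Let R, R_d : ℝ → SO(3) satisfy Ṙ = -[Ω]_× R and Ṙ_d = -[Ω_d]_× R_d. Then the control error R̃ = R R_dᵀ satisfies R̃̇ = -[Ω̃]_× R̃ where Ω̃ = Ω - R̃ Ω_d, and consequently d/dt ||R̃||_I = -(1/2) vex(P_a(R̃))ᵀ Ω̃. -/
open Matrix

lemma hat_cross (A : Matrix (Fin 3) (Fin 3) ℝ) (v : Fin 3 → ℝ) :
    hat (A.mulVec v) * A = (adjugate A)ᵀ * hat v := by
  ext i j
  fin_cases i <;> fin_cases j <;>
    simp [hat, Matrix.mul_apply, Matrix.mulVec, dotProduct, Fin.sum_univ_three,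
      adjugate_fin_three, Matrix.transpose_apply, Matrix.vecHead, Matrix.vecTail] <;> ring

lemma hat_conj (Q : Matrix (Fin 3) (Fin 3) ℝ) (hQ : SO3 Q) (v : Fin 3 → ℝ) :
    hat (Q.mulVec v) * Q = Q * hat v := by
  obtain ⟨h1, h2, h3⟩ := hQ
  have hadj : adjugate Q = Qᵀ := by
    calc adjugate Q = (Qᵀ * Q) * adjugate Q := by rw [h2, one_mul]
    _ = Qᵀ * (Q * adjugate Q) := by rw [mul_assoc]
    _ = Qᵀ := by rw [mul_adjugate, h3, one_smul, mul_one]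
  rw [hat_cross, hadj, transpose_transpose]

lemma SO3_mul_transpose {Q P : Matrix (Fin 3) (Fin 3) ℝ} (hQ : SO3 Q) (hP : SO3 P) :
    SO3 (Q * Pᵀ) := by
  obtain ⟨q1, q2, q3⟩ := hQ
  obtain ⟨p1, p2, p3⟩ := hP
  refine ⟨?_, ?_, ?_⟩
  · rw [transpose_mul, transpose_transpose]
    calc Q * Pᵀ * (P * Qᵀ) = Q * (Pᵀ * P) * Qᵀ := by noncomm_ring
    _ = 1 := by rw [p2, mul_one, q1]
  · rw [transpose_mul, transpose_transpose]
    calc P * Qᵀ * (Q * Pᵀ) = P * (Qᵀ * Q) * Pᵀ := by noncomm_ring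
    _ = 1 := by rw [q2, mul_one, p1]
  · rw [det_mul, det_transpose, q3, p3, mul_one]

lemma trace_formula (A : Matrix (Fin 3) (Fin 3) ℝ) (w : Fin 3 → ℝ) :
    (1/4 : ℝ) * (0 - ∑ i, ((-(hat w)) * A) i i) = -(1/2) * ∑ i, vex (Pa A) i * w i := by
  simp [hat, Pa, vex, Matrix.mul_apply, Fin.sum_univ_three, Matrix.transpose_apply,
    Matrix.sub_apply, Matrix.smul_apply, Matrix.neg_apply]
  ring

theorem control_error_dynamics
    (R Rd : ℝ → Matrix (Fin 3) (Fin 3) ℝ) (Ω Ωd : ℝ → Fin 3 → ℝ)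
    (hSO : ∀ t, SO3 (R t)) (hSOd : ∀ t, SO3 (Rd t))
    (hΩcont : Continuous Ω) (hΩdcont : Continuous Ωd)
    (hR : ∀ t i j, HasDerivAt (fun s => R s i j) ((-(hat (Ω t)) * R t) i j) t)
    (hRd : ∀ t i j, HasDerivAt (fun s => Rd s i j) ((-(hat (Ωd t)) * Rd t) i j) t) :
    (∀ t i j, HasDerivAt (fun s => (R s * (Rd s)ᵀ) i j)
      ((-(hat (Ω t - (R t * (Rd t)ᵀ).mulVec (Ωd t))) * (R t * (Rd t)ᵀ)) i j) t) ∧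
    (∀ t, HasDerivAt (fun s => normI (R s * (Rd s)ᵀ))
      (-(1/2) * ∑ i, vex (Pa (R t * (Rd t)ᵀ)) i
        * (Ω t - (R t * (Rd t)ᵀ).mulVec (Ωd t)) i) t) := by
  have hkey : ∀ t, -(hat (Ω t - (R t * (Rd t)ᵀ).mulVec (Ωd t))) * (R t * (Rd t)ᵀ)
      = (-(hat (Ω t)) * R t) * (Rd t)ᵀ + R t * ((-(hat (Ωd t)) * Rd t))ᵀ := by
    intro t
    have hso : SO3 (R t * (Rd t)ᵀ) := SO3_mul_transpose (hSO t) (hSOd t)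
    have hc := hat_conj _ hso (Ωd t)
    rw [hat_sub]
    have : -(hat (Ω t) - hat ((R t * (Rd t)ᵀ).mulVec (Ωd t))) =
        -(hat (Ω t)) + hat ((R t * (Rd t)ᵀ).mulVec (Ωd t)) := by abel
    rw [this, add_mul, hc, transpose_mul, transpose_neg, hat_transpose, neg_neg]
    noncomm_ring
  have part1 : ∀ t i j, HasDerivAt (fun s => (R s * (Rd s)ᵀ) i j)
      ((-(hat (Ω t - (R t * (Rd t)ᵀ).mulVec (Ωd t))) * (R t * (Rd t)ᵀ)) i j) t := by
    intro t i j
    have hsum : HasDerivAt (fun s => ∑ k : Fin 3, R s i k * Rd s j k)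
        (∑ k : Fin 3, ((-(hat (Ω t)) * R t) i k * Rd t j k
          + R t i k * ((-(hat (Ωd t)) * Rd t) j k))) t :=
      HasDerivAt.fun_sum fun k _ => (hR t i k).mul (hRd t j k)
    have hfun : (fun s => (R s * (Rd s)ᵀ) i j) = fun s => ∑ k : Fin 3, R s i k * Rd s j k := by
      funext s
      simp [Matrix.mul_apply, Matrix.transpose_apply]
    have hval : (-(hat (Ω t - (R t * (Rd t)ᵀ).mulVec (Ωd t))) * (R t * (Rd t)ᵀ)) i j
        = ∑ k : Fin 3, ((-(hat (Ω t)) * R t) i k * Rd t j k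
          + R t i k * ((-(hat (Ωd t)) * Rd t) j k)) := by
      rw [hkey t]
      simp [Matrix.add_apply, Matrix.mul_apply, Matrix.transpose_apply, Finset.sum_add_distrib,
        mul_comm]
    rw [hfun, hval]
    exact hsum
  refine ⟨part1, ?_⟩
  intro t
  have hsum : HasDerivAt (fun s => ∑ i : Fin 3, (R s * (Rd s)ᵀ) i i)
      (∑ i : Fin 3, (-(hat (Ω t - (R t * (Rd t)ᵀ).mulVec (Ωd t))) * (R t * (Rd t)ᵀ)) i i) t :=
    HasDerivAt.fun_sum fun i _ => part1 t i i
  have h2 := ((hsum.const_sub (3 : ℝ)).const_mul ((1/4 : ℝ)))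
  have hfun : (fun s => normI (R s * (Rd s)ᵀ))
      = fun s => (1/4 : ℝ) * ((3 : ℝ) - ∑ i : Fin 3, (R s * (Rd s)ᵀ) i i) := by
    funext s
    simp [normI, Matrix.trace_sub, Matrix.trace_one, Matrix.trace, Matrix.diag]
  rw [hfun]
  have hval := trace_formula (R t * (Rd t)ᵀ) (Ω t - (R t * (Rd t)ᵀ).mulVec (Ωd t))
  have : (1/4 : ℝ) * (0 - ∑ i : Fin 3,
      (-(hat (Ω t - (R t * (Rd t)ᵀ).mulVec (Ωd t))) * (R t * (Rd t)ᵀ)) i i)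
      = -(1/2) * ∑ i, vex (Pa (R t * (Rd t)ᵀ)) i
        * (Ω t - (R t * (Rd t)ᵀ).mulVec (Ωd t)) i := hval
  rw [← this]
  refine h2.congr_deriv ?_
  ring
end
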